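/- Assume σ̄₁ > σ̃ and σ̄₂ > σ̃ and that ρ* > 0 satisfies (σ̄₁ + σ̄₂)·(1 − cosh ρ*) + σ̃·ρ*·sinh ρ* = 0. Then there exists γ₀ > 0 such that for every γ ≥ γ₀ and every k ∈ ℕ (including k = 0), λ_k(γ) > 0. -/

import Mathlib

/-!
At `k = 0` the `γ`-term vanishes and `λ₀` is a constant whose sign is fixed by the stationarity
condition: since `ρ < sinh ρ`, it forces `σ̄₁ + σ̄₂ < σ̃ (cosh ρ + 1)`, which is exactly `λ₀ > 0`.
For `k ≥ 1` the first term of `λ_k` grows at most linearly in `k` (its hyperbolic quotient is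
bounded by `1 / (sinh ρ tanh ρ)`), whereas `γ k³ tanh (ρ k) ≥ γ k tanh ρ`, so a large `γ` wins
uniformly in `k`.
-/

open Real

namespace Real

theorem tanh_le_tanh_iff {x y : ℝ} : tanh x ≤ tanh y ↔ x ≤ y := by
  rw [← artanh_le_artanh_iff ⟨neg_one_lt_tanh x, tanh_lt_one x⟩
    ⟨neg_one_lt_tanh y, tanh_lt_one y⟩, artanh_tanh, artanh_tanh]

theorem tanh_pos {x : ℝ} (hx : 0 < x) : 0 < tanh x := by
  rw [tanh_eq_sinh_div_cosh]
  exact div_pos (sinh_pos_iff.mpr hx) (cosh_pos x)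

end Real

/-- The hyperbolic factor multiplying `μ (σ̄₂ cosh ρ - σ̄₁)` in `λ_k`, as a function of `x = k`. -/
noncomputable def coupling (ρ x : ℝ) : ℝ :=
  √(1 + x ^ 2) * (cosh (ρ * √(1 + x ^ 2)) * cosh (ρ * x) - 1)
    / (sinh ρ * sinh (ρ * √(1 + x ^ 2)) * cosh (ρ * x))

theorem coupling_zero (ρ : ℝ) : coupling ρ 0 = (cosh ρ - 1) / (sinh ρ * sinh ρ) := by
  simp [coupling]

theorem abs_coupling_le {ρ x : ℝ} (hρ : 0 < ρ) (hx : 0 ≤ x) :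
    |coupling ρ x| ≤ (1 + x) / (sinh ρ * tanh ρ) := by
  unfold coupling
  set S := √(1 + x ^ 2)
  have hS : 1 ≤ S := one_le_sqrt.mpr (by nlinarith)
  have hS_le : S ≤ 1 + x := sqrt_le_left (by linarith) |>.mpr (by nlinarith)
  have hsinhρ := sinh_pos_iff.mpr hρ
  have hsinhS := sinh_pos_iff.mpr (by positivity : 0 < ρ * S)
  have hcosh := cosh_pos (ρ * x)
  have hnum : 0 ≤ cosh (ρ * S) * cosh (ρ * x) - 1 := by
    nlinarith [one_le_cosh (ρ * S), one_le_cosh (ρ * x)]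
  have hquot : (cosh (ρ * S) * cosh (ρ * x) - 1) / (sinh ρ * sinh (ρ * S) * cosh (ρ * x))
      ≤ (sinh ρ * tanh ρ)⁻¹ :=
    calc _ ≤ cosh (ρ * S) * cosh (ρ * x) / (sinh ρ * sinh (ρ * S) * cosh (ρ * x)) := by
          gcongr; linarith
      _ = (sinh ρ * tanh (ρ * S))⁻¹ := by rw [tanh_eq_sinh_div_cosh]; field_simp
      _ ≤ (sinh ρ * tanh ρ)⁻¹ := by
          gcongr
          · exact mul_pos hsinhρ (tanh_pos hρ)
          · exact tanh_le_tanh_iff.mpr (le_mul_of_one_le_right hρ.le hS)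
  have hτ := tanh_pos hρ
  rw [mul_div_assoc, abs_of_nonneg (by positivity), div_eq_mul_inv (1 + x)]
  exact mul_le_mul hS_le hquot (by positivity) (by linarith)

theorem add_lt_mul_cosh_add_one_of_stationary {σ₁ σ₂ σt ρ : ℝ} (hσt : 0 < σt) (hρ : 0 < ρ)
    (hstat : (σ₁ + σ₂) * (1 - cosh ρ) + σt * ρ * sinh ρ = 0) :
    σ₁ + σ₂ < σt * (cosh ρ + 1) := by
  have hcosh : 0 < cosh ρ - 1 := sub_pos.mpr (one_lt_cosh.mpr hρ.ne')
  have hsinh : 0 < sinh ρ := sinh_pos_iff.mpr hρ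
  have hlt : σt * ρ * sinh ρ < σt * sinh ρ * sinh ρ := by
    have := self_lt_sinh_iff.mpr hρ
    gcongr
  refine lt_of_mul_lt_mul_right ?_ hcosh.le
  nlinarith [cosh_sq_sub_sinh_sq ρ]

theorem zero_mode_pos {σ₁ σ₂ σt μ ρ : ℝ} (hσt : 0 < σt) (hμ : 0 < μ) (hρ : 0 < ρ)
    (hstat : (σ₁ + σ₂) * (1 - cosh ρ) + σt * ρ * sinh ρ = 0) :
    0 < μ * (σ₂ * cosh ρ - σ₁) * coupling ρ 0 + μ * (σt - σ₂) := by
  have hcosh : 0 < cosh ρ - 1 := sub_pos.mpr (one_lt_cosh.mpr hρ.ne')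
  have hsinh : 0 < sinh ρ * sinh ρ := by have := sinh_pos_iff.mpr hρ; positivity
  have hσ := add_lt_mul_cosh_add_one_of_stationary hσt hρ hstat
  have hsq : sinh ρ * sinh ρ = (cosh ρ - 1) * (cosh ρ + 1) := by
    nlinarith [cosh_sq_sub_sinh_sq ρ]
  have heq : μ * (σ₂ * cosh ρ - σ₁) * coupling ρ 0 + μ * (σt - σ₂)
      = μ * (cosh ρ - 1) * (σt * (cosh ρ + 1) - (σ₁ + σ₂)) / (sinh ρ * sinh ρ) := by
    rw [coupling_zero, eq_div_iff hsinh.ne', hsq]; field_simp; ring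
  rw [heq]
  have := sub_pos.mpr hσ
  positivity

-- `2 |m| / (sinh ρ tanh ρ)` bounds the growth rate in `k` of the coupling term for `k ≥ 1`.
noncomputable def stiffnessThreshold (ρ m B C : ℝ) : ℝ :=
  1 + |B| + (2 * |m| / (sinh ρ * tanh ρ) + |C| + 1) / tanh ρ

theorem stiffnessThreshold_pos {ρ : ℝ} (hρ : 0 < ρ) (m B C : ℝ) :
    0 < stiffnessThreshold ρ m B C := by
  have := tanh_pos hρ
  have := sinh_pos_iff.mpr hρ
  unfold stiffnessThreshold
  positivity

theorem high_mode_pos {ρ m B C γ x : ℝ} (hρ : 0 < ρ) (hx : 1 ≤ x)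
    (hγ : stiffnessThreshold ρ m B C ≤ γ) :
    0 < m * coupling ρ x + (γ * x ^ 2 - B) * x * tanh (ρ * x) + C := by
  set A := 2 * |m| / (sinh ρ * tanh ρ)
  have hτ := tanh_pos hρ
  have := sinh_pos_iff.mpr hρ
  have hfirst : -(A * x) ≤ m * coupling ρ x := by
    have : |m * coupling ρ x| ≤ A * x :=
      calc |m * coupling ρ x| ≤ |m| * ((1 + x) / (sinh ρ * tanh ρ)) := by
            rw [abs_mul]; gcongr; exact abs_coupling_le hρ (by linarith)
        _ ≤ |m| * (2 * x) / (sinh ρ * tanh ρ) := by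
            rw [mul_div_assoc]; gcongr; linarith
        _ = A * x := by ring
    linarith [neg_abs_le (m * coupling ρ x)]
  have hγB : A + |C| + 1 ≤ (γ - B) * tanh ρ := by
    rw [← div_le_iff₀ hτ]
    unfold stiffnessThreshold at hγ
    linarith [le_abs_self B]
  have hγ0 : 0 ≤ γ := le_trans (stiffnessThreshold_pos hρ m B C).le hγ
  have hsecond : (γ - B) * tanh ρ * x ≤ (γ * x ^ 2 - B) * x * tanh (ρ * x) := by
    have hτx : tanh ρ ≤ tanh (ρ * x) := tanh_le_tanh_iff.mpr (le_mul_of_one_le_right hρ.le hx)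
    have hγx : γ - B ≤ γ * x ^ 2 - B := by
      nlinarith [mul_le_mul_of_nonneg_left (one_le_pow₀ hx : 1 ≤ x ^ 2) hγ0]
    have hγB0 : 0 ≤ γ - B := by
      have : 0 ≤ A := by positivity
      nlinarith [abs_nonneg C]
    calc (γ - B) * tanh ρ * x ≤ (γ * x ^ 2 - B) * tanh (ρ * x) * x := by gcongr; linarith
      _ = _ := by ring
  have hx_mul := mul_le_mul_of_nonneg_right hγB (by linarith : 0 ≤ x)
  linarith [neg_abs_le C, le_mul_of_one_le_right (abs_nonneg C) hx]

theorem stmt_18_general (σ₁ σ₂ σt μ ρ : ℝ)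
    (hσt : 0 < σt) (hμ : 0 < μ) (hρ : 0 < ρ)
    (hstat : (σ₁ + σ₂) * (1 - Real.cosh ρ) + σt * ρ * Real.sinh ρ = 0)
    (c₁ : ℝ)
    (lam : ℕ → ℝ → ℝ)
    (hlam : lam = fun (k : ℕ) (γ : ℝ) =>
      μ * (σ₂ * Real.cosh ρ - σ₁) * Real.sqrt (1 + (k : ℝ)^2)
        * (Real.cosh (ρ * Real.sqrt (1 + (k : ℝ)^2)) * Real.cosh (ρ * k) - 1)
        / (Real.sinh ρ * Real.sinh (ρ * Real.sqrt (1 + (k : ℝ)^2)) * Real.cosh (ρ * k))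
      + (γ * (k : ℝ)^2 - μ * σt * ρ - μ * c₁) * (k : ℝ) * Real.tanh (ρ * k)
      + μ * (σt - σ₂)) :
    ∃ γ₀ : ℝ, 0 < γ₀ ∧ ∀ γ : ℝ, γ₀ ≤ γ → ∀ k : ℕ, 0 < lam k γ := by
  set m := μ * (σ₂ * cosh ρ - σ₁)
  set B := μ * σt * ρ + μ * c₁
  have hlam_eq : ∀ k γ, lam k γ
      = m * coupling ρ k + (γ * (k : ℝ) ^ 2 - B) * k * tanh (ρ * k) + μ * (σt - σ₂) := by
    intro k γ
    subst hlam
    simp only [coupling, m, B]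
    ring
  refine ⟨stiffnessThreshold ρ m B (μ * (σt - σ₂)), stiffnessThreshold_pos hρ _ _ _,
    fun γ hγ k => ?_⟩
  rw [hlam_eq]
  rcases k.eq_zero_or_pos with rfl | hk
  · simpa using zero_mode_pos hσt hμ hρ hstat
  · exact high_mode_pos hρ (by exact_mod_cast hk) hγ

/-- if σ̄₁ > σ̃, σ̄₂ > σ̃ and ρ* > 0 satisfies the stationarity
condition, then there exists γ₀ > 0 such that λ_k(γ) > 0 for every γ ≥ γ₀ and
every k ∈ ℕ (including k = 0). -/
theorem stmt_18 (σ₁ σ₂ σt μ ρ : ℝ)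
    (hσ₁ : 0 < σ₁) (hσ₂ : 0 < σ₂) (hσt : 0 < σt) (hμ : 0 < μ) (hρ : 0 < ρ)
    (h₁ : σt < σ₁) (h₂ : σt < σ₂)
    (hstat : (σ₁ + σ₂) * (1 - Real.cosh ρ) + σt * ρ * Real.sinh ρ = 0)
    (c₁ : ℝ) (hc₁ : c₁ = (σ₂ - σ₁ * Real.cosh ρ) / Real.sinh ρ)
    (lam : ℕ → ℝ → ℝ)
    (hlam : lam = fun (k : ℕ) (γ : ℝ) =>
      μ * (σ₂ * Real.cosh ρ - σ₁) * Real.sqrt (1 + (k : ℝ)^2)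
        * (Real.cosh (ρ * Real.sqrt (1 + (k : ℝ)^2)) * Real.cosh (ρ * k) - 1)
        / (Real.sinh ρ * Real.sinh (ρ * Real.sqrt (1 + (k : ℝ)^2)) * Real.cosh (ρ * k))
      + (γ * (k : ℝ)^2 - μ * σt * ρ - μ * c₁) * (k : ℝ) * Real.tanh (ρ * k)
      + μ * (σt - σ₂)) :
    ∃ γ₀ : ℝ, 0 < γ₀ ∧ ∀ γ : ℝ, γ₀ ≤ γ → ∀ k : ℕ, 0 < lam k γ :=
  stmt_18_general σ₁ σ₂ σt μ ρ hσt hμ hρ hstat c₁ lam hlam
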